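/- arXiv:1709.03396 — 3 statements merged into one kernel-verified Lean document; each statement's English description precedes it below -/
import Mathlib

section
/- Let a(x,y), A(x,y), p(x,y) be homogeneous polynomials with deg a ≤ deg A - deg p, and let σ be an invertible 2×2 matrix. If a(x,y) divides p(x,y)(D)A^σ(x,y), then a^{σ^{-1}}(x,y) divides p^{tσ}(x,y)(D)A(x,y). -/
open MvPolynomial

/-- The action f^σ(x,y) = f(ax+by, cx+dy) of a matrix σ on a polynomial. -/
noncomputable def matAct (σ : Matrix (Fin 2) (Fin 2) ℂ)
    (f : MvPolynomial (Fin 2) ℂ) : MvPolynomial (Fin 2) ℂ :=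
  aeval (fun i => C (σ i 0) * X 0 + C (σ i 1) * X 1) f

/-- The differential operator p(D) obtained from p by replacing x, y with ∂/∂x, ∂/∂y,
applied to a polynomial A. -/
noncomputable def polyD (p A : MvPolynomial (Fin 2) ℂ) : MvPolynomial (Fin 2) ℂ :=
  (AddMonoidAlgebra.coeff p).sum fun m c =>
    c • ((fun f => pderiv (0 : Fin 2) f)^[m 0]
          ((fun f => pderiv (1 : Fin 2) f)^[m 1] A))

/-!
By the chain rule, `∂ᵢ(A^σ) = ((Xᵢ)^{tσ}(D)A)^σ`. Both `p ↦ p(D)` (the partial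
derivatives commute) and `p ↦ p^{tσ}` are algebra homomorphisms, so this extends from
the generators `Xᵢ` to `p(D)(A^σ) = (p^{tσ}(D)A)^σ` for every `p`. Applying `σ⁻¹` to
`a ∣ p(D)A^σ` gives the claim.
-/

open scoped Matrix

namespace MvPolynomial

variable {R ι : Type*} [CommSemiring R]

theorem pderiv_pderiv_comm (i j : ι) (f : MvPolynomial ι R) :
    pderiv i (pderiv j f) = pderiv j (pderiv i f) := by
  classical
  induction f using MvPolynomial.induction_on with
  | C c => simp
  | add f g hf hg => simp [hf, hg]
  | mul_X f k hf =>
    have hX : ∀ i j : ι, pderiv i (pderiv j (X k : MvPolynomial ι R)) = 0 := by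
      intro i j
      rcases eq_or_ne k j with rfl | hkj <;> simp [*]
    simp only [pderiv_mul, map_add, hf, hX, mul_zero, add_zero]
    ring

theorem pderiv_aeval [Fintype ι] {κ : Type*} (g : ι → MvPolynomial κ R) (i : κ)
    (f : MvPolynomial ι R) :
    pderiv i (aeval g f) = ∑ j, aeval g (pderiv j f) * pderiv i (g j) := by
  classical
  induction f using MvPolynomial.induction_on with
  | C c => simp
  | add f h hf hh => simp only [map_add, hf, hh, add_mul, Finset.sum_add_distrib]
  | mul_X f k hf =>
    simp only [map_mul, aeval_X, pderiv_mul, hf, map_add, pderiv_X, add_mul,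
      Finset.sum_add_distrib, Finset.sum_mul]
    congr 1
    · exact Finset.sum_congr rfl fun j _ => by ring
    · simp [Pi.single_apply]

end MvPolynomial

local notation "P₂" => MvPolynomial (Fin 2) ℂ

noncomputable def matAlgHom (σ : Matrix (Fin 2) (Fin 2) ℂ) : P₂ →ₐ[ℂ] P₂ :=
  aeval fun i => C (σ i 0) * X 0 + C (σ i 1) * X 1

theorem coe_matAlgHom (σ : Matrix (Fin 2) (Fin 2) ℂ) : ⇑(matAlgHom σ) = matAct σ := rfl

@[simp]
theorem matAlgHom_X (σ : Matrix (Fin 2) (Fin 2) ℂ) (i : Fin 2) :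
    matAlgHom σ (X i) = C (σ i 0) * X 0 + C (σ i 1) * X 1 :=
  aeval_X _ i

theorem matAlgHom_comp (σ τ : Matrix (Fin 2) (Fin 2) ℂ) :
    (matAlgHom τ).comp (matAlgHom σ) = matAlgHom (σ * τ) := by
  refine algHom_ext fun i => ?_
  simp [Matrix.mul_apply, Fin.sum_univ_two]
  ring

theorem matAlgHom_one : matAlgHom 1 = AlgHom.id ℂ P₂ := by
  refine algHom_ext fun i => ?_
  fin_cases i <;> simp

theorem pderiv_matAlgHom (σ : Matrix (Fin 2) (Fin 2) ℂ) (i : Fin 2) (A : P₂) :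
    pderiv i (matAlgHom σ A) =
      matAlgHom σ (C (σ 0 i) * pderiv 0 A + C (σ 1 i) * pderiv 1 A) := by
  rw [matAlgHom, pderiv_aeval]
  fin_cases i <;> simp [Fin.sum_univ_two, pderiv_X, mul_comm]

noncomputable abbrev pderivEnd (i : Fin 2) : Module.End ℂ P₂ := (pderiv i).toLinearMap

theorem commute_pderivEnd : Commute (pderivEnd 0) (pderivEnd 1) :=
  LinearMap.ext fun f => pderiv_pderiv_comm 0 1 f

noncomputable def monomialDiffOp : Multiplicative (Fin 2 →₀ ℕ) →* Module.End ℂ P₂ where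
  toFun m := pderivEnd 0 ^ m.toAdd 0 * pderivEnd 1 ^ m.toAdd 1
  map_one' := by simp
  map_mul' m n := by
    simp only [toAdd_mul, Finsupp.add_apply, pow_add]
    rw [mul_assoc, mul_assoc, ← mul_assoc (pderivEnd 1 ^ _),
      (commute_pderivEnd.symm.pow_pow _ _).eq, mul_assoc]

noncomputable def diffOp : P₂ →ₐ[ℂ] Module.End ℂ P₂ :=
  AddMonoidAlgebra.lift ℂ (Module.End ℂ P₂) (Fin 2 →₀ ℕ) monomialDiffOp

theorem polyD_eq_diffOp (p A : P₂) : polyD p A = diffOp p A := by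
  rw [diffOp, AddMonoidAlgebra.lift_apply, polyD, Finsupp.sum, Finsupp.sum,
    LinearMap.coe_sum, Finset.sum_apply]
  refine Finset.sum_congr rfl fun m _ => ?_
  simp only [LinearMap.smul_apply, monomialDiffOp, MonoidHom.coe_mk, OneHom.coe_mk,
    Module.End.mul_apply, Module.End.pow_apply, toAdd_ofAdd]
  rfl

theorem diffOp_X (i : Fin 2) : diffOp (X i) = pderivEnd i := by
  rw [diffOp, AddMonoidAlgebra.lift_apply]
  fin_cases i <;> simp [X, monomialDiffOp]

theorem diffOp_matAlgHom_transpose_X (σ : Matrix (Fin 2) (Fin 2) ℂ) (i : Fin 2) (A : P₂) :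
    diffOp (matAlgHom σᵀ (X i)) A = C (σ 0 i) * pderiv 0 A + C (σ 1 i) * pderiv 1 A := by
  simp [diffOp_X, Algebra.algebraMap_eq_smul_one, smul_eq_C_mul]

theorem diffOp_comp_matAlgHom (σ : Matrix (Fin 2) (Fin 2) ℂ) (p : P₂) :
    diffOp p ∘ₗ (matAlgHom σ).toLinearMap
      = (matAlgHom σ).toLinearMap ∘ₗ diffOp (matAlgHom σᵀ p) := by
  induction p using MvPolynomial.induction_on with
  | C c => exact LinearMap.ext fun A => by simp [Algebra.algebraMap_eq_smul_one]
  | add p q hp hq => rw [map_add, map_add, map_add, LinearMap.add_comp, LinearMap.comp_add, hp, hq]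
  | mul_X p i hp =>
    refine LinearMap.ext fun A => ?_
    calc diffOp (p * X i) (matAlgHom σ A)
        = diffOp p (pderiv i (matAlgHom σ A)) := by simp [diffOp_X]
      _ = diffOp p (matAlgHom σ (diffOp (matAlgHom σᵀ (X i)) A)) := by
          rw [pderiv_matAlgHom, diffOp_matAlgHom_transpose_X]
      _ = matAlgHom σ (diffOp (matAlgHom σᵀ p) (diffOp (matAlgHom σᵀ (X i)) A)) :=
          LinearMap.congr_fun hp _
      _ = matAlgHom σ (diffOp (matAlgHom σᵀ (p * X i)) A) := by simp

theorem polyD_matAct (σ : Matrix (Fin 2) (Fin 2) ℂ) (p A : P₂) :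
    polyD p (matAct σ A) = matAct σ (polyD (matAct σᵀ p) A) := by
  simpa [polyD_eq_diffOp, coe_matAlgHom] using LinearMap.congr_fun (diffOp_comp_matAlgHom σ p) A

theorem stmt_6_general (σ : Matrix (Fin 2) (Fin 2) ℂ) (hσ : IsUnit σ.det)
    (a A p : MvPolynomial (Fin 2) ℂ)
    (hdvd : a ∣ polyD p (matAct σ A)) :
    matAct σ⁻¹ a ∣ polyD (matAct σ.transpose p) A := by
  rw [polyD_matAct, ← coe_matAlgHom] at hdvd
  have h := map_dvd (matAlgHom σ⁻¹) hdvd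
  rwa [← AlgHom.comp_apply, matAlgHom_comp, Matrix.mul_nonsing_inv σ hσ, matAlgHom_one,
    AlgHom.id_apply, coe_matAlgHom] at h

/-- If a, A, p are homogeneous with deg a ≤ deg A - deg p and σ is invertible, then
a ∣ p(D)A^σ implies a^{σ⁻¹} ∣ p^{tσ}(D)A. -/
theorem stmt_6 (σ : Matrix (Fin 2) (Fin 2) ℂ) (hσ : IsUnit σ.det)
    (a A p : MvPolynomial (Fin 2) ℂ) (da dA dp : ℕ)
    (ha : a.IsHomogeneous da) (hA : A.IsHomogeneous dA) (hp : p.IsHomogeneous dp)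
    (hdeg : da ≤ dA - dp)
    (hdvd : a ∣ polyD p (matAct σ A)) :
    matAct σ⁻¹ a ∣ polyD (matAct σ.transpose p) A :=
  stmt_6_general σ hσ a A p hdvd
end

section
/- The matrix σ_{4/3}·τ has order 12 in GL_2(C), where σ_{4/3} = (√3/2)[[1, 1/3],[1, -1]] and τ = [[1,0],[0,-1]]; moreover σ_{4/3}^2 = I and the group ⟨σ_{4/3}, τ⟩ has order 24. -/
open Matrix DihedralGroup

/-- For σ = σ_{4/3} = (√3/2)[[1, 1/3],[1, -1]] and τ = [[1,0],[0,-1]] in GL₂(ℂ),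
the element στ has order 12, σ² = 1, and the group ⟨σ, τ⟩ has order 24. -/
theorem stmt_18 (σ τ : GL (Fin 2) ℂ)
    (hσ : (σ : Matrix (Fin 2) (Fin 2) ℂ)
        = !![(Real.sqrt 3 : ℂ) / 2, (Real.sqrt 3 : ℂ) / 6;
             (Real.sqrt 3 : ℂ) / 2, -((Real.sqrt 3 : ℂ) / 2)])
    (hτ : (τ : Matrix (Fin 2) (Fin 2) ℂ) = !![1, 0; 0, -1]) :
    orderOf (σ * τ) = 12 ∧ σ ^ 2 = 1
      ∧ Nat.card (Subgroup.closure {σ, τ} : Subgroup (GL (Fin 2) ℂ)) = 24 := by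
  have hs : (Real.sqrt 3 : ℂ) ^ 2 = 3 := by
    norm_cast
    rw [Real.sq_sqrt]; norm_num
  set s : ℂ := (Real.sqrt 3 : ℂ) with hsdef
  -- σ² = 1 and τ² = 1
  have hσ2 : σ ^ 2 = 1 := by
    apply Units.ext
    rw [Units.val_pow_eq_pow_val, hσ, Units.val_one, pow_two, Matrix.mul_fin_two,
      Matrix.one_fin_two]
    ext i j
    fin_cases i <;> fin_cases j <;> simp <;> ring_nf <;>
      rw [hs] <;> ring
  have hτ2 : τ ^ 2 = 1 := by
    apply Units.ext
    rw [Units.val_pow_eq_pow_val, hτ, Units.val_one, pow_two, Matrix.mul_fin_two,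
      Matrix.one_fin_two]
    norm_num
  set ρ : GL (Fin 2) ℂ := σ * τ with hρdef
  have hρval : (ρ : Matrix (Fin 2) (Fin 2) ℂ) = !![s/2, -(s/6); s/2, s/2] := by
    rw [hρdef, Units.val_mul, hσ, hτ, Matrix.mul_fin_two]
    norm_num
  -- matrix powers
  have h2 : (ρ : Matrix (Fin 2) (Fin 2) ℂ) ^ 2 = !![1/2, -(1/2); 3/2, 1/2] := by
    rw [pow_two, hρval, Matrix.mul_fin_two]
    ext i j
    fin_cases i <;> fin_cases j <;> simp <;> ring_nf <;> rw [hs] <;> ring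
  have h4 : (ρ : Matrix (Fin 2) (Fin 2) ℂ) ^ 4 = !![-(1/2), -(1/2); 3/2, -(1/2)] := by
    rw [show (4 : ℕ) = 2 * 2 from rfl, pow_mul, h2, pow_two, Matrix.mul_fin_two]
    norm_num
  have h6 : (ρ : Matrix (Fin 2) (Fin 2) ℂ) ^ 6 = -1 := by
    rw [show (6 : ℕ) = 4 + 2 from rfl, pow_add, h4, h2, Matrix.mul_fin_two]
    ext i j
    fin_cases i <;> fin_cases j <;> simp [Matrix.one_apply] <;> norm_num
  have h12 : (ρ : Matrix (Fin 2) (Fin 2) ℂ) ^ 12 = 1 := by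
    rw [show (12 : ℕ) = 6 * 2 from rfl, pow_mul, h6, neg_one_sq]
  -- order of ρ is 12
  have hρ12 : ρ ^ 12 = 1 := by
    apply Units.ext
    rw [Units.val_pow_eq_pow_val, h12, Units.val_one]
  have hρ6 : ρ ^ 6 ≠ 1 := by
    intro h
    have h' : (ρ : Matrix (Fin 2) (Fin 2) ℂ) ^ 6 = 1 := by
      rw [← Units.val_pow_eq_pow_val, h, Units.val_one]
    rw [h6] at h'
    have := congrFun (congrFun h' 0) 0
    simp [Matrix.one_apply, Matrix.neg_apply] at this
    norm_num at this
  have hρ4 : ρ ^ 4 ≠ 1 := by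
    intro h
    have h' : (ρ : Matrix (Fin 2) (Fin 2) ℂ) ^ 4 = 1 := by
      rw [← Units.val_pow_eq_pow_val, h, Units.val_one]
    rw [h4] at h'
    have := congrFun (congrFun h' 0) 1
    simp [Matrix.one_apply] at this
  have hord : orderOf ρ = 12 := by
    have hdvd : orderOf ρ ∣ 12 := orderOf_dvd_of_pow_eq_one hρ12
    have h6' : ¬ orderOf ρ ∣ 6 := fun h => hρ6 (orderOf_dvd_iff_pow_eq_one.mp h)
    have h4' : ¬ orderOf ρ ∣ 4 := fun h => hρ4 (orderOf_dvd_iff_pow_eq_one.mp h)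
    have hle : orderOf ρ ≤ 12 := Nat.le_of_dvd (by norm_num) hdvd
    have hpos : 0 < orderOf ρ := Nat.pos_of_ne_zero (fun h0 => by
      rw [h0] at hdvd
      exact absurd (Nat.zero_dvd.mp hdvd) (by norm_num))
    generalize hgen : orderOf ρ = n at hdvd h6' h4' hle hpos
    interval_cases n <;> revert hdvd h6' h4' <;> decide
  -- inverse lemmas
  have hτinv : τ⁻¹ = τ := by
    apply inv_eq_of_mul_eq_one_right
    rw [← pow_two, hτ2]
  have hσinv : σ⁻¹ = σ := by
    apply inv_eq_of_mul_eq_one_right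
    rw [← pow_two, hσ2]
  -- conjugation relation: τ ρ τ⁻¹ = ρ⁻¹
  have hconj : τ * ρ * τ⁻¹ = ρ⁻¹ := by
    rw [hτinv, hρdef, _root_.mul_inv_rev, hτinv, hσinv]
    calc τ * (σ * τ) * τ = τ * σ * (τ * τ) := by group
    _ = τ * σ := by rw [← pow_two, hτ2, mul_one]
  have hconjk : ∀ k : ℕ, ρ ^ k * τ = τ * (ρ ^ k)⁻¹ := by
    intro k
    have : τ * ρ ^ k * τ⁻¹ = (ρ ^ k)⁻¹ := by
      rw [← inv_pow, ← hconj, conj_pow]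
    rw [← this, ← mul_assoc, ← mul_assoc, ← pow_two, hτ2, one_mul, hτinv]
  -- power arithmetic over ZMod 12
  have pm : ∀ m : ℕ, ρ ^ (m % 12) = ρ ^ m := fun m => by
    have h := pow_mod_orderOf ρ m
    rwa [hord] at h
  have L1 : ∀ a b : ZMod 12, ρ ^ (a + b).val = ρ ^ a.val * ρ ^ b.val := by
    intro a b
    rw [← pow_add, ZMod.val_add, pm]
  have Linv : ∀ a : ZMod 12, ρ ^ (-a).val = (ρ ^ a.val)⁻¹ := by
    intro a
    apply eq_inv_of_mul_eq_one_left
    rw [← L1, neg_add_cancel, ZMod.val_zero, pow_zero]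
  -- the homomorphism from the dihedral group of order 24
  let φ : DihedralGroup 12 →* GL (Fin 2) ℂ :=
    { toFun := fun x => match x with
        | .r i => ρ ^ i.val
        | .sr i => τ * ρ ^ i.val
      map_one' := by
        show ρ ^ (0 : ZMod 12).val = 1
        simp
      map_mul' := by
        rintro (a | a) (b | b)
        · exact L1 a b
        · show τ * ρ ^ (b - a).val = ρ ^ a.val * (τ * ρ ^ b.val)
          rw [← mul_assoc, hconjk, ← Linv, mul_assoc, ← L1, neg_add_eq_sub]
        · show τ * ρ ^ (a + b).val = τ * ρ ^ a.val * ρ ^ b.val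
          rw [L1, mul_assoc]
        · show ρ ^ (b - a).val = τ * ρ ^ a.val * (τ * ρ ^ b.val)
          symm
          calc τ * ρ ^ a.val * (τ * ρ ^ b.val)
              = τ * (ρ ^ a.val * τ) * ρ ^ b.val := by group
            _ = τ * (τ * (ρ ^ a.val)⁻¹) * ρ ^ b.val := by rw [hconjk]
            _ = (τ * τ) * ((ρ ^ a.val)⁻¹ * ρ ^ b.val) := by group
            _ = ρ ^ (-a).val * ρ ^ b.val := by rw [← pow_two, hτ2, one_mul, Linv]
            _ = ρ ^ (-a + b).val := (L1 _ _).symm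
            _ = ρ ^ (b - a).val := by rw [neg_add_eq_sub] }
  have hφr : ∀ i : ZMod 12, φ (DihedralGroup.r i) = ρ ^ i.val := fun _ => rfl
  have hφsr : ∀ i : ZMod 12, φ (DihedralGroup.sr i) = τ * ρ ^ i.val := fun _ => rfl
  -- determinants
  have hdetρ : ((ρ : Matrix (Fin 2) (Fin 2) ℂ)).det = 1 := by
    rw [hρval, Matrix.det_fin_two_of]
    ring_nf
    rw [hs]; ring
  have hdetτ : ((τ : Matrix (Fin 2) (Fin 2) ℂ)).det = -1 := by
    rw [hτ, Matrix.det_fin_two_of]; norm_num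
  -- injectivity
  have hinj : Function.Injective φ := by
    rw [injective_iff_map_eq_one]
    rintro (a | a) h
    · rw [hφr] at h
      have hdvd : orderOf ρ ∣ a.val := orderOf_dvd_of_pow_eq_one h
      rw [hord] at hdvd
      have hlt : a.val < 12 := a.val_lt
      have hval : a.val = 0 := by omega
      have : a = 0 := (ZMod.val_eq_zero a).mp hval
      rw [DihedralGroup.one_def, this]
    · exfalso
      rw [hφsr] at h
      have := congrArg (fun u : GL (Fin 2) ℂ => ((u : Matrix (Fin 2) (Fin 2) ℂ)).det) h
      simp only [Units.val_mul, Units.val_pow_eq_pow_val, Matrix.det_mul, Matrix.det_pow,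
        hdetρ, hdetτ, Units.val_one, Matrix.det_one, one_pow, mul_one] at this
      norm_num at this
  -- range equals the closure
  have hσmem : σ ∈ Subgroup.closure ({σ, τ} : Set (GL (Fin 2) ℂ)) :=
    Subgroup.subset_closure (by simp)
  have hτmem : τ ∈ Subgroup.closure ({σ, τ} : Set (GL (Fin 2) ℂ)) :=
    Subgroup.subset_closure (by simp)
  have hrange : φ.range = Subgroup.closure ({σ, τ} : Set (GL (Fin 2) ℂ)) := by
    apply le_antisymm
    · rintro x ⟨y, rfl⟩
      have hρmem : ρ ∈ Subgroup.closure ({σ, τ} : Set (GL (Fin 2) ℂ)) :=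
        mul_mem hσmem hτmem
      cases y with
      | r i => rw [hφr]; exact pow_mem hρmem _
      | sr i => rw [hφsr]; exact mul_mem hτmem (pow_mem hρmem _)
    · rw [Subgroup.closure_le]
      rintro x hx
      rcases hx with rfl | rfl
      · refine ⟨DihedralGroup.r 1 * DihedralGroup.sr 0, ?_⟩
        haveI : Fact (1 < 12) := ⟨by norm_num⟩
        rw [_root_.map_mul, hφr, hφsr, ZMod.val_zero, ZMod.val_one, pow_zero, mul_one, pow_one,
          hρdef, mul_assoc, ← pow_two, hτ2, mul_one]
      · exact ⟨DihedralGroup.sr 0, by rw [hφsr, ZMod.val_zero, pow_zero, mul_one]⟩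
  refine ⟨hord, hσ2, ?_⟩
  rw [← hrange]
  have := Nat.card_congr (MonoidHom.ofInjective hinj).toEquiv
  rw [← this, DihedralGroup.nat_card]
end

section
/- The identity (1/6)·(5·(x^2 + y^2/3)^6 + (x^6 - 5x^4y^2 + (5/3)x^2y^4 - (1/27)y^6)^2) = x^12 + (55/9)x^8y^4 - (176/81)x^6y^6 + (55/81)x^4y^8 + (1/729)y^12 holds in C[x,y], and moreover (1/(12·11))·((∂/∂x)^2 + 3(∂/∂y)^2) applied to this degree-12 polynomial equals (x^2 + y^2/3)^5. -/
open MvPolynomial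

/-- (1/6)(5 W_{2,4/3}⁶ + φ₆²) = W₁₂ᴱ = x¹² + (55/9)x⁸y⁴ - (176/81)x⁶y⁶
+ (55/81)x⁴y⁸ + (1/729)y¹², and (1/(12·11))(∂x² + 3∂y²) W₁₂ᴱ = (x² + y²/3)⁵. -/
theorem stmt_19 (W : MvPolynomial (Fin 2) ℂ)
    (hW : W = X 0 ^ 12 + C (55 / 9 : ℂ) * X 0 ^ 8 * X 1 ^ 4
        - C (176 / 81 : ℂ) * X 0 ^ 6 * X 1 ^ 6 + C (55 / 81 : ℂ) * X 0 ^ 4 * X 1 ^ 8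
        + C (1 / 729 : ℂ) * X 1 ^ 12) :
    C (1 / 6 : ℂ) * (5 * (X 0 ^ 2 + C (1 / 3 : ℂ) * X 1 ^ 2) ^ 6
        + (X 0 ^ 6 - 5 * X 0 ^ 4 * X 1 ^ 2 + C (5 / 3 : ℂ) * X 0 ^ 2 * X 1 ^ 4
            - C (1 / 27 : ℂ) * X 1 ^ 6) ^ 2) = W
    ∧ C (1 / (12 * 11) : ℂ) * (pderiv (0 : Fin 2) (pderiv 0 W)
          + 3 * pderiv 1 (pderiv 1 W))
        = (X 0 ^ 2 + C (1 / 3 : ℂ) * X 1 ^ 2) ^ 5 := by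
  subst hW
  constructor
  · apply MvPolynomial.funext
    intro p
    simp only [map_add, map_sub, map_mul, map_pow, map_ofNat, eval_C, eval_X]
    ring
  · simp only [map_add, map_sub, map_mul, map_pow, Derivation.leibniz, Derivation.leibniz_pow,
      pderiv_X, pderiv_C, Pi.single_apply, smul_eq_mul]
    apply MvPolynomial.funext
    intro p
    simp only [map_add, map_sub, map_mul, map_pow, map_ofNat, eval_C, eval_X, map_smul,
      map_nsmul, map_zero, map_one, smul_eq_mul, apply_ite (eval p)]
    norm_num
    ring
end
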